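/- Let A1 be an allotment that induces no negative loop, let s_j ∈ S, and let d ∈ D be a demand unit with A1(d) = s_j. Modify the cost matrix by replacing the row of d with arbitrary new values CM'(d, s) for all s ∈ S (all other rows unchanged), and let A2 denote the same assignment function considered under the modified cost matrix. Among all loops of A2 that pass through the vertex s_j, let C_min be one of minimum cost. Then: (a) if cost(C_min) ≥ 0 (or no loop of A2 passes through s_j), then A2 induces no negative loop; (b) if cost(C_min) < 0 and A3 is the allotment obtained from A2 by removing C_min, then A3 induces no negative loop. -/

import Mathlib

open Finset

/-- Cyclic successor on `Fin n`. -/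
def cnext {n : ℕ} (t : Fin n) : Fin n := ⟨(t.val + 1) % n, Nat.mod_lt _ t.pos⟩

section LBDD

variable {D S : Type*} [Fintype D] [DecidableEq D] [Fintype S] [DecidableEq S]

/-- Occupancy of a service center `s` under allotment `A`: the number of demand
units assigned to `s`. -/
def occ (A : D → S) (s : S) : ℕ := (Finset.univ.filter fun d => A d = s).card

/-- Total cost of an allotment: assignment costs plus accumulated per-allotment penalties. -/
def cost (CM : D → S → ℤ) (p : S → ℕ → ℤ) (A : D → S) : ℤ :=
  (∑ d, CM d (A d)) + ∑ s, ∑ j ∈ Finset.Icc 1 (occ A s), p s j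

/-- Weight of the penalty transfer edge from `si` to `sj` under allotment `A`. -/
def wpen (p : S → ℕ → ℤ) (A : D → S) (si sj : S) : ℤ :=
  p si (occ A si + 1) - p sj (occ A sj)

/-- A loop: a cyclic sequence of `m` edges; edge `t` is directed from `vtx t` to
`vtx (cnext t)`; if `dem t = some d` it is a transfer edge moving demand unit `d`,
and if `dem t = none` it is a penalty transfer edge. -/
structure Loop (S D : Type*) where
  m : ℕ
  vtx : Fin m → S
  dem : Fin m → Option D

/-- `L` is a loop of allotment `A`: at least two pairwise distinct service centers,
each transfer edge moves a demand unit currently assigned to its tail, the demand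
units are pairwise distinct, and there is at most one penalty transfer edge
(no penalty edge: type (i), a cycle of transfer edges; one penalty edge: type (ii),
a path of transfer edges closed by a penalty transfer edge). -/
def IsLoop (A : D → S) (L : Loop S D) : Prop :=
  2 ≤ L.m ∧ Function.Injective L.vtx ∧
  (∀ t d, L.dem t = some d → A d = L.vtx t) ∧
  (∀ t t' d, L.dem t = some d → L.dem t' = some d → t = t') ∧
  (∀ t t', L.dem t = none → L.dem t' = none → t = t')

/-- Weight of edge `t` of loop `L`. -/
def edgeWt (CM : D → S → ℤ) (p : S → ℕ → ℤ) (A : D → S) (L : Loop S D) (t : Fin L.m) : ℤ :=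
  match L.dem t with
  | some d => CM d (L.vtx (cnext t)) - CM d (L.vtx t)
  | none => wpen p A (L.vtx t) (L.vtx (cnext t))

/-- Cost of a loop: the sum of the weights of its edges. -/
def loopCost (CM : D → S → ℤ) (p : S → ℕ → ℤ) (A : D → S) (L : Loop S D) : ℤ :=
  ∑ t, edgeWt CM p A L t

/-- `A` induces a negative loop. -/
def InducesNegLoop (CM : D → S → ℤ) (p : S → ℕ → ℤ) (A : D → S) : Prop :=
  ∃ L : Loop S D, IsLoop A L ∧ loopCost CM p A L < 0

/-- Removing a loop from `A`: for each transfer edge, reassign its demand unit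
from the tail to the head of the edge. -/
noncomputable def removeLoop (A : D → S) (L : Loop S D) : D → S := fun x =>
  if h : ∃ t, L.dem t = some x then L.vtx (cnext (Classical.choose h)) else A x

end LBDD

/-!
Both parts come from a lower bound on the cost, under `CM'`, of an arbitrary allotment `B`.
Walking along the moves from `A1` to `B`, starting at a center that `B` fills less than `A1`, one
either closes a cycle of transfer edges or gets stuck at a center that `B` fills more, which a
penalty edge joins back to the start. Putting the units of such a loop back where `A1` has them
brings `B` closer to `A1` and, penalties being monotone, lowers its cost by at least the cost of
the loop. So `B` costs at least `cost A1` plus the costs of some loops of `A1`, at most one of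
which moves `d`. A loop not moving `d` costs the same under `CM'` as under `CM`, hence is
nonnegative; one moving `d` passes through `s_j`, so it costs at least `0` in case (a) and at
least `cost C_min` in case (b). As removing a loop adds its cost, `A2` in case (a) and `A3` in
case (b) have minimum cost, and an allotment of minimum cost has no negative loop.
-/

open Function

theorem cnext_eq_finRotate {n : ℕ} (t : Fin n) : cnext t = finRotate n t := by
  obtain _ | n := n
  · exact t.elim0
  · ext
    simp [cnext, Fin.val_add]

theorem cnext_ne_self {n : ℕ} (hn : 2 ≤ n) (t : Fin n) : cnext t ≠ t := by
  rw [cnext_eq_finRotate, ← Equiv.Perm.mem_support, support_finRotate_of_le hn]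
  exact Finset.mem_univ t

theorem sum_comp_cnext {M : Type*} [AddCommMonoid M] {n : ℕ} (f : Fin n → M) :
    ∑ t, f (cnext t) = ∑ t, f t := by
  simp_rw [cnext_eq_finRotate]
  exact Equiv.sum_comp _ f

theorem penalty_monotone {S : Type*} {c : S → ℕ} {p : S → ℕ → ℤ}
    (hp0 : ∀ s j, j ≤ c s → p s j = 0) (hppos : ∀ s j, c s < j → 0 < p s j)
    (hpmono : ∀ s j, c s < j → p s j ≤ p s (j + 1)) (s : S) : Monotone (p s) := by
  refine monotone_nat_of_le_succ fun j => ?_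
  rcases lt_trichotomy j (c s) with h | rfl | h
  · rw [hp0 s j h.le, hp0 s (j + 1) h]
  · rw [hp0 s _ le_rfl]
    exact (hppos s _ (Nat.lt_succ_self _)).le
  · exact hpmono s j h

section Loops

variable {D S : Type*} {A : D → S} {L : Loop S D}

namespace IsLoop

theorem two_le (hL : IsLoop A L) : 2 ≤ L.m := hL.1

theorem vtx_injective (hL : IsLoop A L) : Injective L.vtx := hL.2.1

theorem apply_eq_vtx (hL : IsLoop A L) {t : Fin L.m} {x : D} (h : L.dem t = some x) :
    A x = L.vtx t :=
  hL.2.2.1 t x h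

theorem eq_of_dem_eq_some (hL : IsLoop A L) {t t' : Fin L.m} {x : D} (h : L.dem t = some x)
    (h' : L.dem t' = some x) : t = t' :=
  hL.2.2.2.1 t t' x h h'

theorem eq_of_dem_eq_none (hL : IsLoop A L) {t t' : Fin L.m} (h : L.dem t = none)
    (h' : L.dem t' = none) : t = t' :=
  hL.2.2.2.2 t t' h h'

theorem vtx_cnext_ne (hL : IsLoop A L) (t : Fin L.m) : L.vtx (cnext t) ≠ L.vtx t :=
  hL.vtx_injective.ne (cnext_ne_self hL.two_le t)

theorem exists_dem_eq_some (hL : IsLoop A L) : ∃ t x, L.dem t = some x := by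
  by_contra! h
  have h01 := hL.eq_of_dem_eq_none (t := ⟨0, by linarith [hL.two_le]⟩)
    (t' := ⟨1, by linarith [hL.two_le]⟩) (Option.eq_none_iff_forall_ne_some.mpr (h _))
    (Option.eq_none_iff_forall_ne_some.mpr (h _))
  simp [Fin.ext_iff] at h01

theorem sum_ite_dem_eq_none (hL : IsLoop A L) {t₀ : Fin L.m} (ht₀ : L.dem t₀ = none)
    (g : Fin L.m → ℤ) : (∑ t, if L.dem t = none then g t else 0) = g t₀ := by
  rw [Fintype.sum_eq_single t₀ fun t ht => if_neg fun h => ht (hL.eq_of_dem_eq_none h ht₀),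
    if_pos ht₀]

end IsLoop

theorem isLoop_of_injective (hm : 2 ≤ L.m) (hvtx : Injective L.vtx)
    (htail : ∀ t x, L.dem t = some x → A x = L.vtx t)
    (hnone : ∀ t t', L.dem t = none → L.dem t' = none → t = t') : IsLoop A L :=
  ⟨hm, hvtx, htail, fun t t' x h h' => hvtx ((htail t x h).symm.trans (htail t' x h')), hnone⟩

theorem removeLoop_apply_of_dem_eq [DecidableEq D] (hL : IsLoop A L) {t : Fin L.m} {x : D}
    (h : L.dem t = some x) : removeLoop A L x = L.vtx (cnext t) := by
  have hex : ∃ t, L.dem t = some x := ⟨t, h⟩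
  rw [removeLoop, dif_pos hex, hL.eq_of_dem_eq_some (Classical.choose_spec hex) h]

theorem removeLoop_apply_of_forall_dem_ne [DecidableEq D] {x : D} (h : ∀ t, L.dem t ≠ some x) :
    removeLoop A L x = A x := by
  rw [removeLoop, dif_neg (not_exists.mpr h)]

/-- Each demand unit moved by the loop is moved along exactly one of its transfer edges. -/
theorem sum_removeLoop_sub [Fintype D] [DecidableEq D] (hL : IsLoop A L) (f : D → S → ℤ) :
    ∑ x, (f x (removeLoop A L x) - f x (A x)) =
      ∑ t, (L.dem t).elim 0 fun x => f x (L.vtx (cnext t)) - f x (L.vtx t) := by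
  have hx : ∀ x, f x (removeLoop A L x) - f x (A x) =
      ∑ t, if L.dem t = some x then f x (L.vtx (cnext t)) - f x (L.vtx t) else 0 := by
    intro x
    by_cases h : ∃ t, L.dem t = some x
    · obtain ⟨t, ht⟩ := h
      rw [Fintype.sum_eq_single t fun t' ht' => if_neg fun h' => ht' (hL.eq_of_dem_eq_some h' ht),
        if_pos ht, removeLoop_apply_of_dem_eq hL ht, hL.apply_eq_vtx ht]
    · push Not at h
      simp [h, removeLoop_apply_of_forall_dem_ne h]
  rw [Finset.sum_congr rfl fun x _ => hx x, Finset.sum_comm]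
  refine Finset.sum_congr rfl fun t _ => ?_
  cases L.dem t <;> simp

variable [Fintype D] [DecidableEq S] {CM : D → S → ℤ} {p : S → ℕ → ℤ}

theorem edgeWt_eq (t : Fin L.m) :
    edgeWt CM p A L t = (L.dem t).elim 0 (fun x => CM x (L.vtx (cnext t)) - CM x (L.vtx t)) +
      if L.dem t = none then wpen p A (L.vtx t) (L.vtx (cnext t)) else 0 := by
  unfold edgeWt
  cases L.dem t <;> simp

theorem loopCost_le_loopCost_of_wpen_le {A' : D → S}
    (h : ∀ t, L.dem t = none →
      wpen p A (L.vtx t) (L.vtx (cnext t)) ≤ wpen p A' (L.vtx t) (L.vtx (cnext t))) :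
    loopCost CM p A L ≤ loopCost CM p A' L := by
  refine Finset.sum_le_sum fun t _ => ?_
  rw [edgeWt_eq, edgeWt_eq]
  split_ifs with ht
  · linarith [h t ht]
  · rfl

theorem loopCost_eq_of_forall_dem_ne {CM' : D → S → ℤ} {d : D}
    (hCM' : ∀ d' s, d' ≠ d → CM' d' s = CM d' s) (hd : ∀ t, L.dem t ≠ some d) :
    loopCost CM' p A L = loopCost CM p A L := by
  refine Finset.sum_congr rfl fun t _ => ?_
  rw [edgeWt_eq, edgeWt_eq]
  cases h : L.dem t with
  | none => rfl
  | some x =>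
    have hx : x ≠ d := by rintro rfl; exact hd t h
    simp [hCM' x _ hx]

theorem natCast_occ (A : D → S) (s : S) : (occ A s : ℤ) = ∑ x, if A x = s then 1 else 0 :=
  Finset.natCast_card_filter _ _

variable [DecidableEq D]

/-- Around the loop every center is a head as often as a tail, so the transfer edges change the
occupancies by minus the contribution of the penalty edge. -/
theorem natCast_occ_removeLoop (hL : IsLoop A L) (s : S) :
    (occ (removeLoop A L) s : ℤ) = occ A s + ∑ t, if L.dem t = none then
      ((if L.vtx t = s then 1 else 0) - if L.vtx (cnext t) = s then 1 else 0) else 0 := by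
  have h := sum_removeLoop_sub hL fun _ s' => if s' = s then (1 : ℤ) else 0
  rw [Finset.sum_sub_distrib, ← natCast_occ, ← natCast_occ] at h
  have hsplit : ∀ (o : Option D) (g : ℤ),
      (o.elim 0 fun _ => g) = g + if o = none then -g else 0 := by
    rintro (_ | _) g <;> simp
  simp only [hsplit, neg_sub] at h
  rw [Finset.sum_add_distrib, Finset.sum_sub_distrib,
    sum_comp_cnext (fun t => if L.vtx t = s then (1 : ℤ) else 0), sub_self, zero_add] at h
  linarith

theorem natCast_occ_removeLoop_of_dem_eq_none (hL : IsLoop A L) {t₀ : Fin L.m}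
    (ht₀ : L.dem t₀ = none) (s : S) : (occ (removeLoop A L) s : ℤ) =
      occ A s + ((if L.vtx t₀ = s then 1 else 0) - if L.vtx (cnext t₀) = s then 1 else 0) := by
  rw [natCast_occ_removeLoop hL, hL.sum_ite_dem_eq_none ht₀]

theorem occ_removeLoop_tail (hL : IsLoop A L) {t₀ : Fin L.m} (ht₀ : L.dem t₀ = none) :
    occ (removeLoop A L) (L.vtx t₀) = occ A (L.vtx t₀) + 1 := by
  have := natCast_occ_removeLoop_of_dem_eq_none hL ht₀ (L.vtx t₀)
  simp only [if_pos, if_neg (hL.vtx_cnext_ne t₀)] at this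
  omega

theorem occ_removeLoop_head (hL : IsLoop A L) {t₀ : Fin L.m} (ht₀ : L.dem t₀ = none) :
    occ (removeLoop A L) (L.vtx (cnext t₀)) + 1 = occ A (L.vtx (cnext t₀)) := by
  have := natCast_occ_removeLoop_of_dem_eq_none hL ht₀ (L.vtx (cnext t₀))
  simp only [if_pos, if_neg (hL.vtx_cnext_ne t₀).symm] at this
  omega

theorem occ_removeLoop_of_ne (hL : IsLoop A L) {t₀ : Fin L.m} (ht₀ : L.dem t₀ = none) {s : S}
    (hs : s ≠ L.vtx t₀) (hs' : s ≠ L.vtx (cnext t₀)) :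
    occ (removeLoop A L) s = occ A s := by
  have := natCast_occ_removeLoop_of_dem_eq_none hL ht₀ s
  simp only [if_neg hs.symm, if_neg hs'.symm] at this
  omega

theorem occ_removeLoop_of_forall_dem_ne_none (hL : IsLoop A L) (h : ∀ t, L.dem t ≠ none) :
    occ (removeLoop A L) = occ A := by
  funext s
  have := natCast_occ_removeLoop hL s
  simp only [h, if_false, Finset.sum_const_zero, add_zero] at this
  exact_mod_cast this

end Loops

section CostOfRemoval

variable {D S : Type*} [Fintype D] [Fintype S] [DecidableEq S]

def penaltyCost (p : S → ℕ → ℤ) (A : D → S) : ℤ :=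
  ∑ s, ∑ j ∈ Icc 1 (occ A s), p s j

theorem cost_eq_sum_add_penaltyCost (CM : D → S → ℤ) (p : S → ℕ → ℤ) (A : D → S) :
    cost CM p A = ∑ x, CM x (A x) + penaltyCost p A :=
  rfl

variable [DecidableEq D] {CM : D → S → ℤ} {p : S → ℕ → ℤ} {A : D → S} {L : Loop S D}

theorem penaltyCost_removeLoop (hL : IsLoop A L) :
    penaltyCost p (removeLoop A L) = penaltyCost p A +
      ∑ t, if L.dem t = none then wpen p A (L.vtx t) (L.vtx (cnext t)) else 0 := by
  by_cases hpen : ∃ t₀, L.dem t₀ = none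
  · obtain ⟨t₀, ht₀⟩ := hpen
    rw [hL.sum_ite_dem_eq_none ht₀, penaltyCost, penaltyCost, wpen, ← sub_eq_iff_eq_add',
      ← Finset.sum_sub_distrib, Fintype.sum_eq_add _ _ (hL.vtx_cnext_ne t₀).symm fun s hs => by
        rw [occ_removeLoop_of_ne hL ht₀ hs.1 hs.2, sub_self],
      occ_removeLoop_tail hL ht₀, ← occ_removeLoop_head hL ht₀,
      Finset.sum_Icc_succ_top (by omega), Finset.sum_Icc_succ_top (by omega)]
    ring
  · push Not at hpen
    simp [penaltyCost, occ_removeLoop_of_forall_dem_ne_none hL hpen, hpen]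

theorem cost_removeLoop (hL : IsLoop A L) :
    cost CM p (removeLoop A L) = cost CM p A + loopCost CM p A L := by
  have hassign := sum_removeLoop_sub hL CM
  rw [Finset.sum_sub_distrib] at hassign
  simp only [cost_eq_sum_add_penaltyCost, penaltyCost_removeLoop hL, loopCost, edgeWt_eq,
    Finset.sum_add_distrib]
  linarith

theorem not_inducesNegLoop_of_forall_cost_le (h : ∀ B, cost CM p A ≤ cost CM p B) :
    ¬InducesNegLoop CM p A := by
  rintro ⟨L, hL, hneg⟩
  have := h (removeLoop A L)
  rw [cost_removeLoop hL] at this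
  linarith

end CostOfRemoval

section Decomposition

variable {D S : Type*} {A B : D → S} {L : Loop S D}

def revertLoop [DecidableEq D] (A B : D → S) (L : Loop S D) (x : D) : S :=
  if ∃ t, L.dem t = some x then A x else B x

theorem revertLoop_of_dem_eq [DecidableEq D] {t : Fin L.m} {x : D} (h : L.dem t = some x) :
    revertLoop A B L x = A x :=
  if_pos ⟨t, h⟩

theorem revertLoop_of_forall_dem_ne [DecidableEq D] {x : D} (h : ∀ t, L.dem t ≠ some x) :
    revertLoop A B L x = B x :=
  if_neg (not_exists.mpr h)

variable [Fintype D] [DecidableEq S] {CM : D → S → ℤ} {p : S → ℕ → ℤ}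

structure IsLoopToward (A B : D → S) (L : Loop S D) : Prop where
  isLoop : IsLoop A L
  apply_dem : ∀ t x, L.dem t = some x → B x = L.vtx (cnext t)
  occ_lt : ∀ t, L.dem t = none →
    occ A (L.vtx t) < occ B (L.vtx t) ∧ occ B (L.vtx (cnext t)) < occ A (L.vtx (cnext t))

namespace IsLoopToward

theorem apply_ne (hL : IsLoopToward A B L) {t : Fin L.m} {x : D} (h : L.dem t = some x) :
    A x ≠ B x := by
  rw [hL.apply_dem t x h, hL.isLoop.apply_eq_vtx h]
  exact (hL.isLoop.vtx_cnext_ne t).symm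

variable [DecidableEq D]

theorem isLoop_revertLoop (hL : IsLoopToward A B L) : IsLoop (revertLoop A B L) L := by
  refine ⟨hL.isLoop.two_le, hL.isLoop.vtx_injective, fun t x h => ?_,
    fun _ _ _ => hL.isLoop.eq_of_dem_eq_some, fun _ _ => hL.isLoop.eq_of_dem_eq_none⟩
  rw [revertLoop_of_dem_eq h, hL.isLoop.apply_eq_vtx h]

theorem removeLoop_revertLoop (hL : IsLoopToward A B L) :
    removeLoop (revertLoop A B L) L = B := by
  funext x
  by_cases h : ∃ t, L.dem t = some x
  · obtain ⟨t, ht⟩ := h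
    rw [removeLoop_apply_of_dem_eq hL.isLoop_revertLoop ht, hL.apply_dem t x ht]
  · push Not at h
    rw [removeLoop_apply_of_forall_dem_ne h, revertLoop_of_forall_dem_ne h]

theorem card_ne_revertLoop_lt (hL : IsLoopToward A B L) :
    #{x | A x ≠ revertLoop A B L x} < #{x | A x ≠ B x} := by
  obtain ⟨t, x, ht⟩ := hL.isLoop.exists_dem_eq_some
  refine Finset.card_lt_card (Finset.ssubset_iff_of_subset ?_ |>.mpr ⟨x, ?_, ?_⟩)
  · intro y hy
    simp only [Finset.mem_filter, Finset.mem_univ, true_and] at hy ⊢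
    by_cases h : ∃ t, L.dem t = some y
    · obtain ⟨t', ht'⟩ := h
      exact absurd (revertLoop_of_dem_eq ht').symm hy
    · push Not at h
      rwa [revertLoop_of_forall_dem_ne h] at hy
  · simpa using hL.apply_ne ht
  · simp [revertLoop_of_dem_eq (B := B) ht]

variable [Fintype S]

/-- Removing `L` from the reverted allotment gives back `B`; the penalty edge of `L` costs no more
under `A` than under the reverted allotment, since `p` is monotone. -/
theorem cost_revertLoop_add_loopCost_le (hL : IsLoopToward A B L)
    (hmono : ∀ s, Monotone (p s)) :
    cost CM p (revertLoop A B L) + loopCost CM p A L ≤ cost CM p B := by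
  set R := revertLoop A B L
  have hR : IsLoop R L := hL.isLoop_revertLoop
  have hcost := cost_removeLoop (CM := CM) (p := p) hR
  rw [hL.removeLoop_revertLoop] at hcost
  suffices loopCost CM p A L ≤ loopCost CM p R L by linarith
  refine loopCost_le_loopCost_of_wpen_le fun t ht => ?_
  obtain ⟨hu, hv⟩ := hL.occ_lt t ht
  set u := L.vtx t
  set v := L.vtx (cnext t)
  have hu' : occ B u = occ R u + 1 := hL.removeLoop_revertLoop ▸ occ_removeLoop_tail hR ht
  have hv' : occ B v + 1 = occ R v := hL.removeLoop_revertLoop ▸ occ_removeLoop_head hR ht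
  have hpu : p u (occ A u + 1) ≤ p u (occ R u + 1) := hmono u (by omega)
  have hpv : p v (occ R v) ≤ p v (occ A v) := hmono v (by omega)
  unfold wpen
  linarith

end IsLoopToward

end Decomposition

section Iterate

variable {α : Type*} {f : α → α} {x : α}

theorem iterate_mem_periodicPts_of_iterate_eq {a b : ℕ} (hab : a < b) (h : f^[a] x = f^[b] x) :
    f^[a] x ∈ periodicPts f := by
  refine mk_mem_periodicPts (n := b - a) (by omega) ?_
  rw [IsPeriodicPt, IsFixedPt, ← iterate_add_apply, Nat.sub_add_cancel hab.le, h]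

theorem exists_iterate_mem_periodicPts [Finite α] (f : α → α) (x : α) :
    ∃ n, f^[n] x ∈ periodicPts f := by
  obtain ⟨a, b, hne, h⟩ := Finite.exists_ne_map_eq_of_infinite fun n => f^[n] x
  rcases hne.lt_or_gt with hab | hab
  · exact ⟨a, iterate_mem_periodicPts_of_iterate_eq hab h⟩
  · exact ⟨b, iterate_mem_periodicPts_of_iterate_eq hab h.symm⟩

/-- An orbit that reaches a fixed point cannot have looped before: a repeated point would be
periodic, and a periodic point whose orbit contains a fixed point is itself fixed. -/
theorem injOn_iterate_of_isFixedPt {k : ℕ} (hk : IsFixedPt f (f^[k] x))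
    (hmin : ∀ n < k, ¬IsFixedPt f (f^[n] x)) : Set.InjOn (f^[·] x) (Set.Iio (k + 1)) := by
  have key : ∀ a b, a < b → b ≤ k → f^[a] x ≠ f^[b] x := by
    intro a b hab hbk h
    have hper := iterate_mem_periodicPts_of_iterate_eq hab h
    have hfix : IsFixedPt f (f^[k - a] (f^[a] x)) := by
      rwa [← iterate_add_apply, Nat.sub_add_cancel (by omega)]
    rw [← minimalPeriod_eq_one_iff_isFixedPt, minimalPeriod_apply_iterate hper,
      minimalPeriod_eq_one_iff_isFixedPt] at hfix
    exact hmin a (by omega) hfix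
  intro a ha b hb h
  simp only [Set.mem_Iio] at ha hb
  by_contra hne
  rcases Ne.lt_or_gt hne with hab | hab
  · exact key a b hab (by omega) h
  · exact key b a hab (by omega) h.symm

end Iterate

section Walk

variable {D S : Type*} [Fintype D] [DecidableEq S]

noncomputable def mover (A B : D → S) (s : S) : Option D :=
  if h : ∃ x, A x = s ∧ B x ≠ s then some h.choose else none

noncomputable def moveStep (A B : D → S) (s : S) : S :=
  (mover A B s).elim s B

noncomputable def walkLoop (A B : D → S) (s : S) (m : ℕ) : Loop S D where
  m := m
  vtx t := (moveStep A B)^[t] s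
  dem t := mover A B ((moveStep A B)^[t] s)

variable {A B : D → S} {s : S}

theorem mover_eq_some {x : D} (h : mover A B s = some x) : A x = s ∧ B x ≠ s := by
  unfold mover at h
  split_ifs at h with hs
  cases h
  exact hs.choose_spec

theorem mover_eq_none_iff : mover A B s = none ↔ ∀ x, A x = s → B x = s := by
  unfold mover
  split_ifs with hs
  · obtain ⟨x, hA, hB⟩ := hs
    simpa using ⟨x, hA, hB⟩
  · push Not at hs
    simpa using hs

theorem moveStep_of_mover_eq_some {x : D} (h : mover A B s = some x) : moveStep A B s = B x := by
  simp [moveStep, h]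

theorem isFixedPt_moveStep_iff : IsFixedPt (moveStep A B) s ↔ mover A B s = none := by
  cases h : mover A B s with
  | none => simp [IsFixedPt, moveStep, h]
  | some x => simp [IsFixedPt, moveStep, h, (mover_eq_some h).2]

theorem occ_le_occ_of_forall (h : ∀ x, A x = s → B x = s) : occ A s ≤ occ B s :=
  Finset.card_le_card (Finset.monotone_filter_right _ fun x _ => h x)

theorem occ_lt_occ_of_forall (h : ∀ x, A x = s → B x = s) {x₀ : D} (hB : B x₀ = s)
    (hA : A x₀ ≠ s) : occ A s < occ B s :=
  Finset.card_lt_card <| (Finset.ssubset_iff_of_subset <|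
    Finset.monotone_filter_right _ fun x _ => h x).mpr ⟨x₀, by simp [hB], by simp [hA]⟩

theorem occ_lt_occ_moveStep (hstop : IsFixedPt (moveStep A B) (moveStep A B s))
    (hs : ¬IsFixedPt (moveStep A B) s) : occ A (moveStep A B s) < occ B (moveStep A B s) := by
  obtain ⟨x, hx⟩ := Option.ne_none_iff_exists'.mp (mt isFixedPt_moveStep_iff.mpr hs)
  have hstep := moveStep_of_mover_eq_some hx
  refine occ_lt_occ_of_forall (mover_eq_none_iff.mp (isFixedPt_moveStep_iff.mp hstop))
    hstep.symm ?_
  rw [(mover_eq_some hx).1]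
  exact Ne.symm hs

theorem walkLoop_dem_eq_none {m : ℕ}
    (hmove : ∀ n, n + 1 < m → ¬IsFixedPt (moveStep A B) ((moveStep A B)^[n] s))
    {t : Fin (walkLoop A B s m).m} (ht : (walkLoop A B s m).dem t = none) : (t : ℕ) + 1 = m := by
  have : (t : ℕ) < m := t.isLt
  by_contra h
  exact hmove t (by omega) (isFixedPt_moveStep_iff.mpr ht)

theorem isLoop_walkLoop {m : ℕ} (hm : 2 ≤ m)
    (hinj : Set.InjOn ((moveStep A B)^[·] s) (Set.Iio m))
    (hmove : ∀ n, n + 1 < m → ¬IsFixedPt (moveStep A B) ((moveStep A B)^[n] s)) :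
    IsLoop A (walkLoop A B s m) :=
  isLoop_of_injective hm (fun a b h => Fin.ext (hinj a.isLt b.isLt h))
    (fun _ _ h => (mover_eq_some h).1) fun t t' h h' => Fin.ext <| by
      have := walkLoop_dem_eq_none hmove h
      have := walkLoop_dem_eq_none hmove h'
      omega

theorem isLoopToward_walkLoop {m : ℕ} (hm : 2 ≤ m)
    (hinj : Set.InjOn ((moveStep A B)^[·] s) (Set.Iio m))
    (hmove : ∀ n, n + 1 < m → ¬IsFixedPt (moveStep A B) ((moveStep A B)^[n] s))
    (hlast : (moveStep A B)^[m] s = s ∨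
      (IsFixedPt (moveStep A B) ((moveStep A B)^[m - 1] s) ∧
        occ A ((moveStep A B)^[m - 1] s) < occ B ((moveStep A B)^[m - 1] s) ∧
        occ B s < occ A s)) :
    IsLoopToward A B (walkLoop A B s m) := by
  set f := moveStep A B
  set L := walkLoop A B s m
  have hcnext : ∀ t : Fin L.m, (cnext t : ℕ) = ((t : ℕ) + 1) % m := fun _ => rfl
  refine ⟨isLoop_walkLoop hm hinj hmove, fun t x h => ?_, fun t ht => ?_⟩
  · have hB : B x = f^[(t : ℕ) + 1] s := by
      rw [iterate_succ_apply']
      exact (moveStep_of_mover_eq_some h).symm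
    change B x = f^[cnext t] s
    rw [hB, hcnext]
    rcases Nat.lt_or_ge ((t : ℕ) + 1) m with hlt | hge
    · rw [Nat.mod_eq_of_lt hlt]
    · have htm : (t : ℕ) + 1 = m := by have : (t : ℕ) < m := t.isLt; omega
      rw [htm, Nat.mod_self, iterate_zero_apply]
      rcases hlast with hper | ⟨hfix, -⟩
      · exact hper
      · rw [show m - 1 = t by omega, isFixedPt_moveStep_iff] at hfix
        exact absurd (h.symm.trans hfix) (by simp)
  · have htm := walkLoop_dem_eq_none hmove ht
    change occ A (f^[t] s) < occ B (f^[t] s) ∧ occ B (f^[cnext t] s) < occ A (f^[cnext t] s)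
    rw [hcnext, htm, Nat.mod_self, iterate_zero_apply]
    rcases hlast with hper | ⟨-, hocc⟩
    · have hfix : IsFixedPt f (f^[t] s) := isFixedPt_moveStep_iff.mpr ht
      have h0 : f^[t] s = f^[0] s :=
        calc f^[t] s = f (f^[t] s) := hfix.eq.symm
          _ = f^[m] s := by rw [← htm, iterate_succ_apply']
          _ = f^[0] s := hper
      have : (t : ℕ) = 0 :=
        hinj (Set.mem_Iio.mpr (by omega)) (Set.mem_Iio.mpr (by omega)) h0
      omega
    · rwa [show m - 1 = t by omega] at hocc

variable [Fintype S]

theorem exists_occ_lt_of_occ_lt (h : occ A s < occ B s) :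
    ∃ s', occ B s' < occ A s' := by
  by_contra! h'
  have hsum : ∀ C : D → S, ∑ s, occ C s = Fintype.card D := fun C =>
    (Finset.card_eq_sum_card_fiberwise fun x _ => Finset.mem_univ (C x)).symm
  have := Finset.sum_lt_sum (fun s _ => h' s) ⟨s, Finset.mem_univ _, h⟩
  rw [hsum, hsum] at this
  exact lt_irrefl _ this

/-- The walk from `s` either runs into a cycle, or stops at a center that `B` fills more than `A`,
which `hstart` lets us close with a penalty edge back to `s`. -/
theorem exists_isLoopToward_of_not_isFixedPt (hs : ¬IsFixedPt (moveStep A B) s)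
    (hstart : (∃ s', occ A s' < occ B s') → occ B s < occ A s) : ∃ L, IsLoopToward A B L := by
  set f := moveStep A B
  by_cases hstop : ∃ n, IsFixedPt f (f^[n] s)
  · classical
    set k := Nat.find hstop
    have hk : IsFixedPt f (f^[k] s) := Nat.find_spec hstop
    have hmin : ∀ n < k, ¬IsFixedPt f (f^[n] s) := fun n => Nat.find_min hstop
    obtain ⟨j, hj⟩ : ∃ j, k = j + 1 :=
      Nat.exists_eq_succ_of_ne_zero fun hk0 => hs (by rw [hk0] at hk; exact hk)
    have hexc : occ A (f^[k] s) < occ B (f^[k] s) := by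
      rw [hj, iterate_succ_apply'] at hk ⊢
      exact occ_lt_occ_moveStep hk (hmin j (by omega))
    refine ⟨_, isLoopToward_walkLoop (m := k + 1) (by omega)
      (injOn_iterate_of_isFixedPt hk hmin) (fun n hn => hmin n (by omega)) (Or.inr ?_)⟩
    simpa using ⟨hk, hexc, hstart ⟨_, hexc⟩⟩
  · push Not at hstop
    obtain ⟨n, hn⟩ := exists_iterate_mem_periodicPts f s
    have hmove : ∀ i, ¬IsFixedPt f (f^[i] (f^[n] s)) := fun i => by
      rw [← iterate_add_apply]
      exact hstop _
    have hper := minimalPeriod_pos_of_mem_periodicPts hn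
    have hne1 : minimalPeriod f (f^[n] s) ≠ 1 := by
      rw [Ne, minimalPeriod_eq_one_iff_isFixedPt]
      exact hmove 0
    exact ⟨_, isLoopToward_walkLoop (m := minimalPeriod f (f^[n] s)) (by omega)
      iterate_injOn_Iio_minimalPeriod (fun i _ => hmove i) (Or.inl iterate_minimalPeriod)⟩

theorem exists_isLoopToward (hAB : A ≠ B) : ∃ L, IsLoopToward A B L := by
  by_cases hexc : ∃ s, occ B s < occ A s
  · obtain ⟨s, hs⟩ := hexc
    refine exists_isLoopToward_of_not_isFixedPt (s := s) (fun hfix => ?_) fun _ => hs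
    exact (occ_le_occ_of_forall <| mover_eq_none_iff.mp <| isFixedPt_moveStep_iff.mp hfix).not_gt hs
  · push Not at hexc
    obtain ⟨x, hx⟩ := Function.ne_iff.mp hAB
    refine exists_isLoopToward_of_not_isFixedPt (s := A x) (fun hfix => ?_)
      fun ⟨_, h⟩ => absurd (exists_occ_lt_of_occ_lt h) (by simpa using hexc)
    exact hx.symm (mover_eq_none_iff.mp (isFixedPt_moveStep_iff.mp hfix) x rfl)

end Walk

section Optimality

variable {D S : Type*} [Fintype D] [DecidableEq D] [Fintype S] [DecidableEq S]
  {CM : D → S → ℤ} {p : S → ℕ → ℤ}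

/-- By induction on the number of units where `A` and `B` differ, reverting one loop towards `B`
at a time. -/
theorem cost_add_ite_le_cost (hmono : ∀ s, Monotone (p s)) {A : D → S} {d : D} {γ : ℤ}
    (hfree : ∀ L, IsLoop A L → (∀ t, L.dem t ≠ some d) → 0 ≤ loopCost CM p A L)
    (hmoving : ∀ L, IsLoop A L → (∃ t, L.dem t = some d) → γ ≤ loopCost CM p A L)
    (B : D → S) : cost CM p A + (if A d = B d then 0 else γ) ≤ cost CM p B := by
  induction hn : #{x | A x ≠ B x} using Nat.strong_induction_on generalizing B with
  | _ n ih =>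
  by_cases hAB : A = B
  · simp [hAB]
  obtain ⟨L, hL⟩ := exists_isLoopToward hAB
  have hR := ih _ (hn ▸ hL.card_ne_revertLoop_lt) (revertLoop A B L) rfl
  have hstep := hL.cost_revertLoop_add_loopCost_le (CM := CM) hmono
  by_cases hdL : ∃ t, L.dem t = some d
  · obtain ⟨t, ht⟩ := hdL
    rw [revertLoop_of_dem_eq ht, if_pos rfl] at hR
    rw [if_neg (hL.apply_ne ht)]
    linarith [hmoving L hL.isLoop ⟨t, ht⟩]
  · push Not at hdL
    rw [revertLoop_of_forall_dem_ne hdL] at hR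
    linarith [hfree L hL.isLoop hdL]

end Optimality

/-- let `A1` induce no negative loop, let `d` be a demand unit with
`A1 d = sj`, and modify the cost matrix only on the row of `d` (obtaining `CM'`;
`A2` is the same assignment function viewed under `CM'`, so its loops are
exactly the loops of `A1`, evaluated with costs from `CM'`).
(a) If every loop of `A2` passing through `sj` has nonnegative cost, then `A2`
induces no negative loop.
(b) If `Cmin` is a loop of `A2` of minimum cost among the loops passing through
`sj` and its cost is negative, then removing `Cmin` yields an allotment inducing
no negative loop. -/
theorem restore_optimality_after_row_change
    (D S : Type) [Fintype D] [DecidableEq D] [Fintype S] [DecidableEq S]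
    (CM CM' : D → S → ℤ) (c : S → ℕ) (p : S → ℕ → ℤ)
    (hp0 : ∀ s j, j ≤ c s → p s j = 0)
    (hppos : ∀ s j, c s < j → 0 < p s j)
    (hpmono : ∀ s j, c s < j → p s j ≤ p s (j + 1))
    (A1 : D → S) (d : D) (sj : S) (hd : A1 d = sj)
    (hA1 : ¬ InducesNegLoop CM p A1)
    (hCM' : ∀ d' s, d' ≠ d → CM' d' s = CM d' s) :
    ((∀ L : Loop S D, IsLoop A1 L → (∃ t, L.vtx t = sj) →
        0 ≤ loopCost CM' p A1 L) → ¬ InducesNegLoop CM' p A1) ∧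
    (∀ Cmin : Loop S D, IsLoop A1 Cmin → (∃ t, Cmin.vtx t = sj) →
        (∀ L : Loop S D, IsLoop A1 L → (∃ t, L.vtx t = sj) →
          loopCost CM' p A1 Cmin ≤ loopCost CM' p A1 L) →
        loopCost CM' p A1 Cmin < 0 →
        ¬ InducesNegLoop CM' p (removeLoop A1 Cmin)) := by
  have hmono := penalty_monotone hp0 hppos hpmono
  have hfree : ∀ L, IsLoop A1 L → (∀ t, L.dem t ≠ some d) → 0 ≤ loopCost CM' p A1 L :=
    fun L hL hdL => loopCost_eq_of_forall_dem_ne hCM' hdL ▸ not_lt.mp fun h => hA1 ⟨L, hL, h⟩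
  have hthrough : ∀ L, IsLoop A1 L → (∃ t, L.dem t = some d) → ∃ t, L.vtx t = sj :=
    fun L hL ⟨t, ht⟩ => ⟨t, (hL.apply_eq_vtx ht).symm.trans hd⟩
  refine ⟨fun hnonneg => ?_, fun Cmin hC _ hCmin hneg => ?_⟩
  · refine not_inducesNegLoop_of_forall_cost_le fun B => ?_
    simpa using cost_add_ite_le_cost hmono hfree
      (fun L hL hdL => hnonneg L hL (hthrough L hL hdL)) B
  · refine not_inducesNegLoop_of_forall_cost_le fun B => ?_
    have := cost_add_ite_le_cost hmono hfree (fun L hL hdL => hCmin L hL (hthrough L hL hdL)) B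
    rw [cost_removeLoop hC]
    split_ifs at this <;> linarith
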